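/- Let p be a polynomial in k real variables of total degree d such that |p| ≤ 1 on [−1,1]^k. Then for each coordinate direction j, the partial derivative satisfies sup_{x ∈ [−1,1]^k} |∂p/∂x_j (x)| ≤ c_k · d², where c_k is a constant depending only on k (and for k = 1 one may take c_1 = 1). -/

import Mathlib

/-!
Restricted to the line through a point `x` of the cube parallel to the `j`-th axis, `p` becomes
a univariate polynomial `q` of degree at most `d`, bounded by `1` on `[-1, 1]`, with
`q'(x_j) = ∂p/∂x_j (x)`. At the endpoint `1`, Markov's inequality `|q'(1)| ≤ d²` is the extremal
property of the Chebyshev polynomial `T_d`, whose derivative at `1` is `d²`. Any other point of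
`[-1, 1]` is the image of `1` under an affine self-map of `[-1, 1]` with slope at least `1/2`,
so composing with it gives `|q'| ≤ 2 d²` on all of `[-1, 1]`; hence `c = 2` works for every `k`.
-/

open Polynomial

namespace Polynomial

theorem abs_derivative_eval_one_le {n : ℕ} {q : ℝ[X]} (hdeg : q.natDegree ≤ n)
    (hq : ∀ t ∈ Set.Icc (-1 : ℝ) 1, |q.eval t| ≤ 1) :
    |(derivative q).eval 1| ≤ (n : ℝ) ^ 2 := by
  have upper : ∀ r : ℝ[X], r.natDegree ≤ n → (∀ t ∈ Set.Icc (-1 : ℝ) 1, |r.eval t| ≤ 1) →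
      (derivative r).eval 1 ≤ (n : ℝ) ^ 2 := fun r hr hrb => by
    simpa [Chebyshev.derivative_T_eval_one] using
      Chebyshev.eval_iterate_derivative_le_of_forall_abs_le_one (k := 1) le_rfl
        (natDegree_le_iff_degree_le.mp hr) hrb
  have hneg := upper (-q) (by rwa [natDegree_neg]) (by simpa using hq)
  rw [derivative_neg, eval_neg] at hneg
  exact abs_le.mpr ⟨by linarith, upper q hdeg hq⟩

theorem abs_mul_abs_derivative_eval_le {n : ℕ} {q : ℝ[X]} (hdeg : q.natDegree ≤ n)
    (hq : ∀ t ∈ Set.Icc (-1 : ℝ) 1, |q.eval t| ≤ 1) {a b : ℝ}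
    (hab : Set.MapsTo (fun t => a * t + b) (Set.Icc (-1) 1) (Set.Icc (-1) 1)) :
    |a| * |(derivative q).eval (a + b)| ≤ (n : ℝ) ^ 2 := by
  have hℓ : (C a * X + C b).natDegree ≤ 1 := natDegree_linear_le
  have hdeg' : (q.comp (C a * X + C b)).natDegree ≤ n :=
    natDegree_comp_le.trans (by simpa using Nat.mul_le_mul hdeg hℓ)
  have hderiv :
      (derivative (q.comp (C a * X + C b))).eval 1 = a * (derivative q).eval (a + b) := by
    simp [derivative_comp]
  rw [← abs_mul, ← hderiv]
  exact abs_derivative_eval_one_le hdeg' fun t ht => by simpa using hq _ (hab ht)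

theorem exists_affine_mapsTo_Icc {x : ℝ} (hx : x ∈ Set.Icc (-1 : ℝ) 1) :
    ∃ a b : ℝ, a + b = x ∧ 1 / 2 ≤ |a| ∧
      Set.MapsTo (fun t => a * t + b) (Set.Icc (-1) 1) (Set.Icc (-1) 1) := by
  obtain ⟨hx₁, hx₂⟩ := hx
  rcases le_total 0 x with h | h
  · refine ⟨(1 + x) / 2, (x - 1) / 2, by ring, ?_, fun t ⟨ht₁, ht₂⟩ => ⟨?_, ?_⟩⟩
    · rw [abs_of_nonneg (by linarith)]; linarith
    all_goals nlinarith
  · refine ⟨(x - 1) / 2, (x + 1) / 2, by ring, ?_, fun t ⟨ht₁, ht₂⟩ => ⟨?_, ?_⟩⟩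
    · rw [abs_of_nonpos (by linarith)]; linarith
    all_goals nlinarith

theorem abs_derivative_eval_le_two_mul_sq {n : ℕ} {q : ℝ[X]} (hdeg : q.natDegree ≤ n)
    (hq : ∀ t ∈ Set.Icc (-1 : ℝ) 1, |q.eval t| ≤ 1) {x : ℝ} (hx : x ∈ Set.Icc (-1 : ℝ) 1) :
    |(derivative q).eval x| ≤ 2 * (n : ℝ) ^ 2 := by
  obtain ⟨a, b, rfl, ha, hab⟩ := exists_affine_mapsTo_Icc hx
  have := abs_mul_abs_derivative_eval_le hdeg hq hab
  nlinarith [abs_nonneg ((derivative q).eval (a + b))]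

end Polynomial

namespace MvPolynomial

variable {σ R : Type*} [CommSemiring R]

theorem natDegree_aeval_le_totalDegree {f : σ → R[X]} (hf : ∀ i, (f i).natDegree ≤ 1)
    (p : MvPolynomial σ R) : (aeval f p).natDegree ≤ p.totalDegree := by
  rw [aeval_def, eval₂_eq]
  refine natDegree_sum_le_of_forall_le _ _ fun m hm => ?_
  calc (algebraMap R R[X] (coeff m p) * ∏ i ∈ m.support, f i ^ m i).natDegree
      ≤ ∑ i ∈ m.support, (f i ^ m i).natDegree :=
        (natDegree_C_mul_le _ _).trans (natDegree_prod_le _ _)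
    _ ≤ ∑ i ∈ m.support, m i :=
        Finset.sum_le_sum fun i _ => (natDegree_pow_le_of_le _ (hf i)).trans_eq (mul_one _)
    _ ≤ p.totalDegree := le_totalDegree hm

variable [DecidableEq σ]

noncomputable def restrictLine (x : σ → R) (j : σ) : MvPolynomial σ R →ₐ[R] R[X] :=
  aeval (Function.update (fun i => Polynomial.C (x i)) j Polynomial.X)

theorem eval_restrictLine (x : σ → R) (j : σ) (p : MvPolynomial σ R) (t : R) :
    (restrictLine x j p).eval t = eval (Function.update x j t) p := by
  rw [restrictLine, ← Polynomial.coe_aeval_eq_eval, comp_aeval_apply, aeval_eq_eval]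
  congr 2
  funext i
  rcases eq_or_ne i j with rfl | h <;> simp [*]

theorem derivative_restrictLine (x : σ → R) (j : σ) (p : MvPolynomial σ R) :
    derivative (restrictLine x j p) = restrictLine x j (pderiv j p) := by
  induction p using MvPolynomial.induction_on with
  | C a => simp
  | add p q hp hq => simp [hp, hq]
  | mul_X p i hp =>
    simp only [restrictLine] at hp ⊢
    rcases eq_or_ne i j with rfl | h
    · simp [derivative_mul, hp]
      ring
    · simp [derivative_mul, hp, h, pderiv_X_of_ne h]
      ring

theorem natDegree_restrictLine_le (x : σ → R) (j : σ) (p : MvPolynomial σ R) :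
    (restrictLine x j p).natDegree ≤ p.totalDegree :=
  natDegree_aeval_le_totalDegree (fun i => by
    rcases eq_or_ne i j with rfl | h <;> simp [natDegree_X_le, *]) p

end MvPolynomial

open MvPolynomial

/-- Bernstein–Markov inequality on the cube `[-1,1]^k`: there is a constant `c_k`,
depending only on `k`, such that every polynomial of total degree at most `d`
bounded by `1` on `[-1,1]^k` has each partial derivative bounded by `c_k · d²`
on `[-1,1]^k`. -/
theorem stmt19 (k : ℕ) :
    ∃ c : ℝ, 0 < c ∧
      ∀ (d : ℕ) (p : MvPolynomial (Fin k) ℝ), p.totalDegree ≤ d →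
        (∀ x ∈ Set.Icc (fun _ => (-1 : ℝ)) (fun _ => (1 : ℝ)),
          |MvPolynomial.eval x p| ≤ 1) →
        ∀ (j : Fin k), ∀ x ∈ Set.Icc (fun _ => (-1 : ℝ)) (fun _ => (1 : ℝ)),
          |MvPolynomial.eval x (MvPolynomial.pderiv j p)| ≤ c * (d : ℝ) ^ 2 := by
  refine ⟨2, two_pos, fun d p hdeg hp j x hx => ?_⟩
  have hline : ∀ t ∈ Set.Icc (-1 : ℝ) 1,
      Function.update x j t ∈ Set.Icc (fun _ => (-1 : ℝ)) (fun _ => (1 : ℝ)) :=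
    fun t ht => ⟨le_update_iff.mpr ⟨ht.1, fun i _ => hx.1 i⟩,
      update_le_iff.mpr ⟨ht.2, fun i _ => hx.2 i⟩⟩
  have hderiv : eval x (pderiv j p) = (derivative (restrictLine x j p)).eval (x j) := by
    rw [derivative_restrictLine, eval_restrictLine, Function.update_eq_self]
  rw [hderiv]
  exact abs_derivative_eval_le_two_mul_sq ((natDegree_restrictLine_le x j p).trans hdeg)
    (fun t ht => by rw [eval_restrictLine]; exact hp _ (hline t ht)) ⟨hx.1 j, hx.2 j⟩
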